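/- Bijection between EBMs and ARMs (equality of log-partitions): if q = M(r), then the sequence-level log-partition of the EBM equals the soft value of the ARM at the prompt, A^EBM_{R_r}(x) = V_q(x). -/

import Mathlib

/-! For a context `s`, expand `exp (V_{M(r)}(s))` along the recursion defining `M`: the `EOS`
term is the completion that stops at `s`, and the term of a token `v` is
`exp r(s, v) · exp V_{M(r)}(s ⊕ v)`. By backward induction on the depth of `s`, the reward
collected before `s` times `exp V_{M(r)}(s)` is the sum of `exp R_r` over all completions of `s`;
at the prompt the completions are all finished responses. -/

open Finset

/-! Contexts extending a fixed prompt `x` by `t < T` vocabulary tokens; a context is a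
prefix of vocabulary tokens of length `< T`.  `none : Option V` plays the role of `EOS`. -/

/-- Contexts extending the prompt by fewer than `T` vocabulary tokens. -/
abbrev Ctx (V : Type) (T : ℕ) := Σ t : Fin T, Fin (t : ℕ) → V

/-- Admissible next tokens at a context: only `EOS` (= `none`) at maximal contexts. -/
def adm (V : Type) [Fintype V] (T : ℕ) (s : Ctx V T) : Finset (Option V) :=
  if (s.1 : ℕ) + 1 = T then {none} else Finset.univ

/-- Soft value `V_q(s) = log ∑_{j admissible at s} exp q(s, j)`. -/
noncomputable def Vq (V : Type) [Fintype V] (T : ℕ)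
    (q : Ctx V T × Option V → ℝ) (s : Ctx V T) : ℝ :=
  Real.log (∑ a ∈ adm V T s, Real.exp (q (s, a)))

/-- Next-token policy `π_q(j | s) = exp (q(s,j) - V_q(s))`. -/
noncomputable def piq (V : Type) [Fintype V] (T : ℕ)
    (q : Ctx V T × Option V → ℝ) (s : Ctx V T) (a : Option V) : ℝ :=
  Real.exp (q (s, a) - Vq V T q s)

/-- Extending a context by one vocabulary token. -/
def ext (V : Type) (T : ℕ) (s : Ctx V T) (v : V) (h : (s.1 : ℕ) + 1 < T) : Ctx V T :=
  ⟨⟨(s.1 : ℕ) + 1, h⟩, Fin.snoc s.2 v⟩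

/-- The strict prefix of length `i` of (the vocabulary part of) a finished response `y`. -/
def pref (V : Type) (T : ℕ) (y : Ctx V T) (i : Fin (y.1 : ℕ)) : Ctx V T :=
  ⟨⟨(i : ℕ), lt_trans i.isLt y.1.isLt⟩, fun j => y.2 (Fin.castLE (le_of_lt i.isLt) j)⟩

/-- The mapping `M` (backward recursion), as a function of the depth of the context. -/
noncomputable def Mgo (V : Type) [Fintype V] (T : ℕ) (r : Ctx V T × Option V → ℝ)
    (t : ℕ) (ht : t < T) (s : Fin t → V) (a : Option V) : ℝ :=
  match a with
  | none => r (⟨⟨t, ht⟩, s⟩, none)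
  | some v =>
    r (⟨⟨t, ht⟩, s⟩, some v) +
      if h : t + 1 < T then
        Real.log (∑ b ∈ adm V T ⟨⟨t + 1, h⟩, Fin.snoc s v⟩,
          Real.exp (Mgo V T r (t + 1) h (Fin.snoc s v) b))
      else 0
termination_by T - t
decreasing_by omega

/-- The mapping `q = M(r)`: `q(s, EOS) = r(s, EOS)` and
`q(s, y) = r(s, y) + V_q(s ⊕ y)` for a vocabulary token `y`. -/
noncomputable def Mmap (V : Type) [Fintype V] (T : ℕ)
    (r : Ctx V T × Option V → ℝ) : Ctx V T × Option V → ℝ :=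
  fun p => Mgo V T r (p.1.1 : ℕ) p.1.1.isLt p.1.2 p.2

/-- The inverse mapping `r = M⁻¹(q)`: `r(s, EOS) = q(s, EOS)` and
`r(s, y) = q(s, y) - V_q(s ⊕ y)` for a vocabulary token `y`. -/
noncomputable def Minv (V : Type) [Fintype V] (T : ℕ)
    (q : Ctx V T × Option V → ℝ) : Ctx V T × Option V → ℝ :=
  fun p =>
    match p with
    | (s, none) => q (s, none)
    | (s, some v) =>
      q (s, some v) - if h : (s.1 : ℕ) + 1 < T then Vq V T q (ext V T s v h) else 0

/-- Autoregressive probability of the finished response `y ⊕ EOS`. -/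
noncomputable def pARM (V : Type) [Fintype V] (T : ℕ)
    (q : Ctx V T × Option V → ℝ) (y : Ctx V T) : ℝ :=
  (∏ i : Fin (y.1 : ℕ), piq V T q (pref V T y i) (some (y.2 i))) * piq V T q y none

/-- Sequence-level reward `R_r(x, y) = ∑_t r(x ⊕ y_{<t}, y_t)` of the finished
response `y ⊕ EOS`. -/
noncomputable def Rr (V : Type) [Fintype V] (T : ℕ)
    (r : Ctx V T × Option V → ℝ) (y : Ctx V T) : ℝ :=
  (∑ i : Fin (y.1 : ℕ), r (pref V T y i, some (y.2 i))) + r (y, none)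

/-- Sequence-level log-partition `A^EBM_{R_r}(x)`. -/
noncomputable def Aebm (V : Type) [Fintype V] (T : ℕ)
    (r : Ctx V T × Option V → ℝ) : ℝ :=
  Real.log (∑ y : Ctx V T, Real.exp (Rr V T r y))

/-- EBM probability of the finished response `y ⊕ EOS`. -/
noncomputable def pEBM (V : Type) [Fintype V] (T : ℕ)
    (r : Ctx V T × Option V → ℝ) (y : Ctx V T) : ℝ :=
  Real.exp (Rr V T r y - Aebm V T r)

section

variable {V : Type} {T : ℕ}

lemma ctx_mk_eq_mk {a b : ℕ} (ha : a < T) (hb : b < T) (h : a = b)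
    {f : Fin a → V} {g : Fin b → V} (hfg : ∀ i : Fin a, f i = g (Fin.cast h i)) :
    (⟨⟨a, ha⟩, f⟩ : Ctx V T) = ⟨⟨b, hb⟩, g⟩ := by
  subst h
  simp only [Fin.cast_eq_self] at hfg
  rw [funext hfg]

noncomputable def prefixReward (r : Ctx V T × Option V → ℝ) (y : Ctx V T) : ℝ :=
  ∑ i : Fin (y.1 : ℕ), r (pref V T y i, some (y.2 i))

lemma pref_ext_castSucc (s : Ctx V T) (v : V) (h : (s.1 : ℕ) + 1 < T) (i : Fin s.1) :
    pref V T (ext V T s v h) i.castSucc = pref V T s i :=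
  ctx_mk_eq_mk _ _ rfl fun j =>
    Fin.snoc_castSucc (α := fun _ => V) v s.2 (Fin.castLE i.isLt.le j)

lemma pref_ext_last (s : Ctx V T) (v : V) (h : (s.1 : ℕ) + 1 < T) :
    pref V T (ext V T s v h) (Fin.last s.1) = s :=
  ctx_mk_eq_mk _ _ rfl fun _ => Fin.snoc_castSucc (α := fun _ => V) _ _ _

lemma prefixReward_ext (r : Ctx V T × Option V → ℝ) (s : Ctx V T) (v : V)
    (h : (s.1 : ℕ) + 1 < T) :
    prefixReward r (ext V T s v h) = prefixReward r s + r (s, some v) := by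
  show ∑ i : Fin (s.1 + 1), _ = _
  rw [Fin.sum_univ_castSucc]
  simp only [pref_ext_castSucc, pref_ext_last]
  simp only [_root_.ext, Fin.snoc_castSucc, Fin.snoc_last]
  rfl

def ctxAppend (s : Ctx V T) {n : ℕ} (hn : (s.1 : ℕ) + n + 1 = T)
    (p : Σ k : Fin (n + 1), Fin k → V) : Ctx V T :=
  ⟨⟨s.1 + p.1, by omega⟩, Fin.append s.2 p.2⟩

lemma ctxAppend_zero (s : Ctx V T) {n : ℕ} (hn : (s.1 : ℕ) + n + 1 = T) (w : Fin 0 → V) :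
    ctxAppend s hn ⟨0, w⟩ = s :=
  ctx_mk_eq_mk _ _ rfl fun i => Fin.append_left s.2 w i

lemma ctxAppend_succ_cons (s : Ctx V T) {n : ℕ} (hn : (s.1 : ℕ) + (n + 1) + 1 = T)
    (v : V) (k : Fin (n + 1)) (w : Fin k → V) :
    ctxAppend s hn ⟨k.succ, Fin.cons v w⟩ =
      ctxAppend (ext V T s v (by omega)) (n := n) (by simp only [_root_.ext]; omega) ⟨k, w⟩ :=
  ctx_mk_eq_mk _ _ (Nat.succ_add_eq_add_succ _ _).symm fun i => by
    rw [Fin.append_right_cons]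
    rfl

lemma ctxAppend_elim0 {n : ℕ} (h : 0 < n + 1) (hn : 0 + n + 1 = n + 1)
    (p : Ctx V (n + 1)) : ctxAppend ⟨⟨0, h⟩, Fin.elim0⟩ hn p = p :=
  ctx_mk_eq_mk _ _ (Nat.zero_add _) fun i => congrFun (Fin.append_left_nil _ _ rfl) i

end

section

variable {V : Type} [Fintype V] {T : ℕ}

lemma Fintype.sum_sigma_fin_succ {M : Type*} [AddCommMonoid M] (n : ℕ)
    (f : (Σ k : Fin (n + 2), Fin k → V) → M) :
    ∑ p, f p = f ⟨0, Fin.elim0⟩ +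
      ∑ v : V, ∑ p : Σ k : Fin (n + 1), Fin k → V, f ⟨p.1.succ, Fin.cons v p.2⟩ := by
  rw [Fintype.sum_sigma, Fin.sum_univ_succ]
  congr 1
  · exact Fintype.sum_unique (ι := Fin 0 → V) _
  · simp only [Fintype.sum_sigma]
    rw [Finset.sum_comm]
    refine Fintype.sum_congr _ _ fun k => ?_
    rw [← Fintype.sum_prod_type']
    exact ((Fin.consEquiv fun _ => V).sum_comp fun w => f ⟨k.succ, w⟩).symm

lemma none_mem_adm (s : Ctx V T) : none ∈ adm V T s := by
  unfold adm
  split_ifs <;> simp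

lemma exp_Vq (q : Ctx V T × Option V → ℝ) (s : Ctx V T) :
    Real.exp (Vq V T q s) = ∑ a ∈ adm V T s, Real.exp (q (s, a)) :=
  Real.exp_log (Finset.sum_pos (fun _ _ => Real.exp_pos _) ⟨none, none_mem_adm s⟩)

variable (r : Ctx V T × Option V → ℝ)

lemma Mmap_none (s : Ctx V T) : Mmap V T r (s, none) = r (s, none) := by
  rw [Mmap, Mgo]

lemma Mmap_some (s : Ctx V T) (v : V) (h : (s.1 : ℕ) + 1 < T) :
    Mmap V T r (s, some v) = r (s, some v) + Vq V T (Mmap V T r) (ext V T s v h) := by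
  rw [Mmap, Mgo, dif_pos h]
  rfl

lemma exp_prefixReward_add_Vq_Mmap :
    ∀ (n : ℕ) (s : Ctx V T) (hn : (s.1 : ℕ) + n + 1 = T),
      Real.exp (prefixReward r s + Vq V T (Mmap V T r) s) =
        ∑ p, Real.exp (Rr V T r (ctxAppend s hn p))
  | 0, s, hn => by
    have hadm : adm V T s = {none} := if_pos (by omega)
    rw [Real.exp_add, exp_Vq, hadm, sum_singleton, Mmap_none, ← Real.exp_add, Fintype.sum_sigma,
      Fin.sum_univ_one]
    exact ((Fintype.sum_unique (ι := Fin 0 → V) _).trans (by rw [ctxAppend_zero]; rfl)).symm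
  | n + 1, s, hn => by
    have h : (s.1 : ℕ) + 1 < T := by omega
    have hadm : adm V T s = univ := if_neg (by omega)
    rw [Real.exp_add, exp_Vq, hadm, Fintype.sum_option, Mmap_none, mul_add, ← Real.exp_add,
      mul_sum, Fintype.sum_sigma_fin_succ, ctxAppend_zero]
    congr 1
    refine Fintype.sum_congr _ _ fun v => ?_
    rw [Mmap_some r s v h, ← Real.exp_add, ← add_assoc, ← prefixReward_ext r s v h,
      exp_prefixReward_add_Vq_Mmap n (ext V T s v h) (by simp only [_root_.ext]; omega)]
    simp only [ctxAppend_succ_cons]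

end

/-- **Bijection between EBMs and ARMs (equality of log-partitions).**
If `q = M(r)`, then the sequence-level log-partition of the EBM equals the soft
value of the ARM at the prompt (the empty context): `A^EBM_{R_r}(x) = V_q(x)`. -/
theorem ebm_logpartition_eq_value (V : Type) [Fintype V] (T : ℕ) (hT : 1 ≤ T)
    (r q : Ctx V T × Option V → ℝ) (hq : q = Mmap V T r) :
    Aebm V T r = Vq V T q ⟨⟨0, hT⟩, Fin.elim0⟩ := by
  subst hq
  obtain ⟨m, rfl⟩ : ∃ m, T = m + 1 := ⟨T - 1, by omega⟩
  have key := exp_prefixReward_add_Vq_Mmap r m ⟨⟨0, hT⟩, Fin.elim0⟩ (by simp)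
  rw [prefixReward, Fin.sum_univ_zero, zero_add] at key
  rw [Aebm, ← Real.log_exp (Vq _ _ _ _), key]
  simp only [ctxAppend_elim0]
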